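/- arXiv:2201.01248 — 3 statements merged into one kernel-verified Lean document; each statement's English description precedes it below -/
import Mathlib

section
/- Assume 𝒢 is connected. If (λ, g) is an eigenpair of ℋ_p with g(u) > 0 for every u ∈ V, then λ = λ₁, where λ₁ = min_{f ∈ 𝒮_p} ℛ(f) is the first variational eigenvalue of ℋ_p. -/
noncomputable section

open Finset

/-- `φ_p(x) = |x|^{p-2} x` (real exponent, `φ_p(0) = 0`). -/
def phiP (p x : ℝ) : ℝ := |x| ^ (p - 2) * x

/-- The generalized `p`-Laplacian `ℋ_p`.  The edge-weight function `ω` is assumed to be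
symmetric and to vanish on pairs of non-adjacent vertices, so the sum over all vertices
is the sum over the neighbours of `u`. -/
def genLap {V : Type*} [Fintype V] (ω : V → V → ℝ) (κ : V → ℝ) (p : ℝ)
    (f : V → ℝ) (u : V) : ℝ :=
  (∑ v : V, ω u v * phiP p (f u - f v)) + κ u * phiP p (f u)

/-- `(lam, f)` is an eigenpair of `ℋ_p`. -/
def IsEigenpair {V : Type*} [Fintype V] (ω : V → V → ℝ) (κ ϱ : V → ℝ) (p lam : ℝ)
    (f : V → ℝ) : Prop :=
  f ≠ 0 ∧ ∀ u, genLap ω κ p f u = lam * (ϱ u * phiP p (f u))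

/-- The Rayleigh quotient `ℛ` of `ℋ_p` (each edge `uv` is counted once: the double sum
counts it twice, whence the factor `1/2`). -/
def rayleigh {V : Type*} [Fintype V] (ω : V → V → ℝ) (κ ϱ : V → ℝ) (p : ℝ)
    (f : V → ℝ) : ℝ :=
  ((1 / 2) * ∑ u : V, ∑ v : V, ω u v * |f u - f v| ^ p + ∑ u : V, κ u * |f u| ^ p) /
    ∑ u : V, ϱ u * |f u| ^ p

/-- The `p`-sphere `𝒮_p`. -/
def pSphere (V : Type*) [Fintype V] (p : ℝ) : Set (V → ℝ) := {f | ∑ u : V, |f u| ^ p = 1}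

/-- The Krasnoselskii genus of a (symmetric) subset of `ℝ^V`. -/
def krasGenus {V : Type*} [Fintype V] (A : Set (V → ℝ)) : ℕ∞ :=
  sInf {n : ℕ∞ | ∃ k : ℕ, n = (k : ℕ∞) ∧ ∃ φ : (V → ℝ) → (Fin k → ℝ),
    ContinuousOn φ A ∧ (∀ x ∈ A, φ (-x) = -φ x) ∧ ∀ x ∈ A, φ x ≠ 0}

/-- The `k`-th variational eigenvalue of `ℋ_p`: the min over closed symmetric subsets of the
`p`-sphere of genus at least `k` of the max of the Rayleigh quotient. -/
def varEig {V : Type*} [Fintype V] (ω : V → V → ℝ) (κ ϱ : V → ℝ) (p : ℝ) (k : ℕ) : ℝ :=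
  sInf {r : ℝ | ∃ A : Set (V → ℝ), A ⊆ pSphere V p ∧ IsClosed A ∧ (∀ f ∈ A, -f ∈ A) ∧
    (k : ℕ∞) ≤ krasGenus A ∧ IsGreatest (rayleigh ω κ ϱ p '' A) r}

/-- The subgraph `𝒢₊(f)`: vertices where `f ≠ 0`, edges where `f` has equal nonzero signs. -/
def posGraph {V : Type*} (G : SimpleGraph V) (f : V → ℝ) : SimpleGraph V where
  Adj u v := G.Adj u v ∧ 0 < f u * f v
  symm := ⟨by
    intro u v h
    exact ⟨h.1.symm, by rw [mul_comm]; exact h.2⟩⟩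
  loopless := ⟨fun u h => G.loopless.irrefl u h.1⟩

/-- The number `ν(f)` of (strong) nodal domains of `f`: the number of connected components of
`𝒢₊(f)` consisting of vertices where `f` is nonzero. -/
def nodalCount {V : Type*} (G : SimpleGraph V) (f : V → ℝ) : ℕ :=
  {c : (posGraph G f).ConnectedComponent |
    ∀ u, (posGraph G f).connectedComponentMk u = c → f u ≠ 0}.ncard

/-- The subgraph of edges on which `f` changes sign. -/
def negGraph {V : Type*} (G : SimpleGraph V) (f : V → ℝ) : SimpleGraph V where
  Adj u v := G.Adj u v ∧ f u * f v < 0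
  symm := ⟨by
    intro u v h
    exact ⟨h.1.symm, by rw [mul_comm]; exact h.2⟩⟩
  loopless := ⟨fun u h => G.loopless.irrefl u h.1⟩

/-- `ζ(f)`: the number of edges on which `f` changes sign. -/
def zetaCount {V : Type*} [Fintype V] (G : SimpleGraph V) (f : V → ℝ) : ℕ :=
  (negGraph G f).edgeSet.ncard

/-- `z(f)`: the number of vertices where `f` vanishes. -/
def zeroCount {V : Type*} [Fintype V] (f : V → ℝ) : ℕ := {u : V | f u = 0}.ncard

/-- `l(f)`: the number of independent loops (cycle rank) of `𝒢₊(f)`,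
`|E(𝒢₊(f))| − |V(𝒢₊(f))| + ν(f)`. -/
def loopCount {V : Type*} [Fintype V] (G : SimpleGraph V) (f : V → ℝ) : ℤ :=
  ((posGraph G f).edgeSet.ncard : ℤ) - ({u : V | f u ≠ 0}.ncard : ℤ) + (nodalCount G f : ℤ)

/-- The subgraph `𝒢'(f)` of `𝒢` induced on the support of `f` (vertices with `f = 0` are
deleted together with all incident edges; in this encoding they are kept as isolated
vertices, which are discarded in the counts below). -/
def suppGraph {V : Type*} (G : SimpleGraph V) (f : V → ℝ) : SimpleGraph V where
  Adj u v := G.Adj u v ∧ f u ≠ 0 ∧ f v ≠ 0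
  symm := ⟨by
    intro u v h
    exact ⟨h.1.symm, h.2.2, h.2.1⟩⟩
  loopless := ⟨fun u h => G.loopless.irrefl u h.1⟩

/-- `c(f)`: the number of connected components of `𝒢'(f)`. -/
def compCount {V : Type*} (G : SimpleGraph V) (f : V → ℝ) : ℕ :=
  {c : (suppGraph G f).ConnectedComponent |
    ∀ u, (suppGraph G f).connectedComponentMk u = c → f u ≠ 0}.ncard

/-- `β'(f)`: the number of independent loops of `𝒢'(f)`,
`|E(𝒢'(f))| − |V(𝒢'(f))| + c(f)`. -/
def betaSupp {V : Type*} [Fintype V] (G : SimpleGraph V) (f : V → ℝ) : ℤ :=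
  ((suppGraph G f).edgeSet.ncard : ℤ) - ({u : V | f u ≠ 0}.ncard : ℤ) + (compCount G f : ℤ)

/-!
Picone's argument. Testing the eigenvalue equation of the positive eigenfunction `g` against `g`
itself gives `ℛ(g) = λ`. Testing it against `|f|^p / g^{p-1}` instead, and bounding each edge term
by the discrete Picone inequality `φ_p(a - b) (X^p / a^{p-1} - Y^p / b^{p-1}) ≤ |X - Y|^p`, gives
`λ ≤ ℛ(f)` for every `f ≠ 0`. Hence `λ` is the minimum of `ℛ` on `𝒮_p`.
-/

lemma phiP_neg (p x : ℝ) : phiP p (-x) = -phiP p x := by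
  simp [phiP, abs_neg]

lemma phiP_of_pos (p : ℝ) {t : ℝ} (ht : 0 < t) : phiP p t = t ^ (p - 1) := by
  rw [phiP, abs_of_pos ht, Real.rpow_sub_one ht.ne', Real.rpow_sub ht, Real.rpow_two]
  field_simp

lemma phiP_mul_self {p : ℝ} (hp : p ≠ 0) (t : ℝ) : phiP p t * t = |t| ^ p := by
  rcases eq_or_ne t 0 with rfl | ht
  · simp [Real.zero_rpow hp]
  · rw [phiP, Real.rpow_sub (abs_pos.2 ht), Real.rpow_two, mul_assoc, ← abs_mul_abs_self t]
    field_simp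

lemma phiP_mul_div_rpow_sub_one (p : ℝ) {a : ℝ} (ha : 0 < a) (x : ℝ) :
    phiP p a * (x / a ^ (p - 1)) = x := by
  rw [phiP_of_pos p ha, mul_div_cancel₀ _ (Real.rpow_pos_of_pos ha _).ne']

lemma mul_div_rpow_eq {x : ℝ} (hx : 0 < x) {y : ℝ} (hy : 0 ≤ y) (p : ℝ) :
    x * (y / x) ^ p = y ^ p / x ^ (p - 1) := by
  rw [Real.div_rpow hy hx.le, Real.rpow_sub_one hx.ne']
  have : 0 < x ^ p := Real.rpow_pos_of_pos hx p
  field_simp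

lemma abs_mul_rpow_of_pos {t : ℝ} (ht : 0 < t) (x p : ℝ) : |t * x| ^ p = t ^ p * |x| ^ p := by
  rw [abs_mul, abs_of_pos ht, Real.mul_rpow ht.le (abs_nonneg x)]

/- The perspective `(c, A) ↦ A * (c / A) ^ p` of the convex function `x ↦ x ^ p` is jointly
convex and positively homogeneous, hence subadditive. -/
lemma add_rpow_div_add_rpow_sub_one_le {p : ℝ} (hp : 1 ≤ p) {c d A B : ℝ}
    (hc : 0 ≤ c) (hd : 0 ≤ d) (hA : 0 < A) (hB : 0 < B) :
    (c + d) ^ p / (A + B) ^ (p - 1) ≤ c ^ p / A ^ (p - 1) + d ^ p / B ^ (p - 1) := by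
  have hAB : 0 < A + B := by linarith
  have hconv := (convexOn_rpow hp).2 (Set.mem_Ici.2 (div_nonneg hc hA.le))
    (Set.mem_Ici.2 (div_nonneg hd hB.le)) (div_nonneg hA.le hAB.le) (div_nonneg hB.le hAB.le)
    (by field_simp : A / (A + B) + B / (A + B) = 1)
  have hmean : A / (A + B) * (c / A) + B / (A + B) * (d / B) = (c + d) / (A + B) := by
    field_simp
  simp only [smul_eq_mul, hmean] at hconv
  calc (c + d) ^ p / (A + B) ^ (p - 1) = (A + B) * ((c + d) / (A + B)) ^ p :=
        (mul_div_rpow_eq hAB (by positivity) p).symm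
    _ ≤ (A + B) * (A / (A + B) * (c / A) ^ p + B / (A + B) * (d / B) ^ p) := by gcongr
    _ = A * (c / A) ^ p + B * (d / B) ^ p := by field_simp
    _ = c ^ p / A ^ (p - 1) + d ^ p / B ^ (p - 1) := by
        rw [mul_div_rpow_eq hA hc, mul_div_rpow_eq hB hd]

lemma picone_of_le {p : ℝ} (hp : 1 < p) {a b X Y : ℝ} (hb : 0 < b) (hba : b ≤ a)
    (hX : 0 ≤ X) (hY : 0 ≤ Y) :
    phiP p (a - b) * (X ^ p / a ^ (p - 1) - Y ^ p / b ^ (p - 1)) ≤ |X - Y| ^ p := by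
  obtain rfl | hba := hba.eq_or_lt
  · simp only [sub_self, phiP, mul_zero, zero_mul]
    positivity
  have hab : 0 < a - b := sub_pos.2 hba
  rw [phiP_of_pos p hab]
  rcases le_or_gt X Y with hXY | hYX
  · have hdiv : X ^ p / a ^ (p - 1) ≤ Y ^ p / b ^ (p - 1) := by gcongr
    calc _ ≤ (0 : ℝ) := mul_nonpos_of_nonneg_of_nonpos (by positivity) (sub_nonpos.2 hdiv)
      _ ≤ _ := by positivity
  · have key := add_rpow_div_add_rpow_sub_one_le hp.le (sub_nonneg.2 hYX.le) hY hab hb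
    rw [sub_add_cancel, sub_add_cancel] at key
    rw [abs_of_pos (sub_pos.2 hYX)]
    calc (a - b) ^ (p - 1) * (X ^ p / a ^ (p - 1) - Y ^ p / b ^ (p - 1))
        ≤ (a - b) ^ (p - 1) * ((X - Y) ^ p / (a - b) ^ (p - 1)) := by
          gcongr
          linarith
      _ = (X - Y) ^ p := mul_div_cancel₀ _ (by positivity)

lemma picone {p : ℝ} (hp : 1 < p) {a b X Y : ℝ} (ha : 0 < a) (hb : 0 < b)
    (hX : 0 ≤ X) (hY : 0 ≤ Y) :
    phiP p (a - b) * (X ^ p / a ^ (p - 1) - Y ^ p / b ^ (p - 1)) ≤ |X - Y| ^ p := by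
  rcases le_total b a with hba | hab
  · exact picone_of_le hp hb hba hX hY
  · have h := picone_of_le hp ha hab hY hX
    rw [← neg_sub a b, phiP_neg, abs_sub_comm] at h
    linarith

section Energy

variable {V : Type*} [Fintype V]

def pEnergy (ω : V → V → ℝ) (κ : V → ℝ) (p : ℝ) (f : V → ℝ) : ℝ :=
  (1 / 2) * ∑ u : V, ∑ v : V, ω u v * |f u - f v| ^ p + ∑ u : V, κ u * |f u| ^ p

lemma rayleigh_eq_pEnergy_div (ω : V → V → ℝ) (κ ϱ : V → ℝ) (p : ℝ) (f : V → ℝ) :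
    rayleigh ω κ ϱ p f = pEnergy ω κ p f / ∑ u : V, ϱ u * |f u| ^ p :=
  rfl

lemma sum_genLap_mul {ω : V → V → ℝ} (hω : ∀ u v, ω u v = ω v u) (κ : V → ℝ) (p : ℝ)
    (f h : V → ℝ) :
    ∑ u : V, genLap ω κ p f u * h u =
      (1 / 2) * ∑ u : V, ∑ v : V, ω u v * (phiP p (f u - f v) * (h u - h v)) +
        ∑ u : V, κ u * (phiP p (f u) * h u) := by
  have hswap : ∑ u : V, ∑ v : V, ω u v * phiP p (f u - f v) * h v =
      -∑ u : V, ∑ v : V, ω u v * phiP p (f u - f v) * h u := by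
    rw [Finset.sum_comm, ← Finset.sum_neg_distrib]
    refine Finset.sum_congr rfl fun u _ => ?_
    rw [← Finset.sum_neg_distrib]
    refine Finset.sum_congr rfl fun v _ => ?_
    rw [hω, ← neg_sub (f u), phiP_neg]
    ring
  simp only [genLap, add_mul, Finset.sum_mul, mul_sub, ← mul_assoc, Finset.sum_add_distrib,
    Finset.sum_sub_distrib, hswap]
  ring

lemma pEnergy_eq_sum_genLap_mul_self {ω : V → V → ℝ} (hω : ∀ u v, ω u v = ω v u) (κ : V → ℝ)
    {p : ℝ} (hp : p ≠ 0) (f : V → ℝ) :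
    pEnergy ω κ p f = ∑ u : V, genLap ω κ p f u * f u := by
  simp only [sum_genLap_mul hω, phiP_mul_self hp, pEnergy]

lemma sum_genLap_mul_le_pEnergy {ω : V → V → ℝ} (hω : ∀ u v, ω u v = ω v u)
    (hω_nonneg : ∀ u v, 0 ≤ ω u v) (κ : V → ℝ) {p : ℝ} (hp : 1 < p) {g : V → ℝ}
    (hg : ∀ u, 0 < g u) (f : V → ℝ) :
    ∑ u : V, genLap ω κ p g u * (|f u| ^ p / g u ^ (p - 1)) ≤ pEnergy ω κ p f := by
  simp only [sum_genLap_mul hω, phiP_mul_div_rpow_sub_one p (hg _), pEnergy]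
  gcongr with u _ v _
  · exact hω_nonneg u v
  · refine (picone hp (hg u) (hg v) (abs_nonneg _) (abs_nonneg _)).trans ?_
    exact Real.rpow_le_rpow (abs_nonneg _) (abs_abs_sub_abs_le_abs_sub (f u) (f v)) (by linarith)

lemma sum_mul_abs_rpow_pos {ϱ : V → ℝ} (hϱ : ∀ u, 0 < ϱ u) {f : V → ℝ} (hf : f ≠ 0) (p : ℝ) :
    0 < ∑ u : V, ϱ u * |f u| ^ p := by
  obtain ⟨u, hu⟩ := Function.ne_iff.1 hf
  have hu' : 0 < |f u| := abs_pos.2 hu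
  refine Finset.sum_pos' (fun v _ => ?_) ⟨u, Finset.mem_univ u, ?_⟩
  · exact mul_nonneg (hϱ v).le (by positivity)
  · exact mul_pos (hϱ u) (by positivity)

lemma pEnergy_smul (ω : V → V → ℝ) (κ : V → ℝ) (p : ℝ) {t : ℝ} (ht : 0 < t) (f : V → ℝ) :
    pEnergy ω κ p (t • f) = t ^ p * pEnergy ω κ p f := by
  simp only [pEnergy, Pi.smul_apply, smul_eq_mul, ← mul_sub, abs_mul_rpow_of_pos ht,
    mul_left_comm _ (t ^ p), ← Finset.mul_sum]
  ring

lemma rayleigh_smul (ω : V → V → ℝ) (κ ϱ : V → ℝ) (p : ℝ) {t : ℝ} (ht : 0 < t) (f : V → ℝ) :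
    rayleigh ω κ ϱ p (t • f) = rayleigh ω κ ϱ p f := by
  simp only [rayleigh_eq_pEnergy_div, pEnergy_smul ω κ p ht, Pi.smul_apply, smul_eq_mul,
    abs_mul_rpow_of_pos ht, mul_left_comm _ (t ^ p), ← Finset.mul_sum]
  exact mul_div_mul_left _ _ (Real.rpow_pos_of_pos ht p).ne'

end Energy

section Sphere

variable {V : Type*} [Fintype V] {p : ℝ}

lemma ne_zero_of_mem_pSphere (hp : p ≠ 0) {f : V → ℝ} (hf : f ∈ pSphere V p) : f ≠ 0 := by
  rintro rfl
  simp [pSphere, Real.zero_rpow hp] at hf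

lemma exists_pos_smul_mem_pSphere (hp : p ≠ 0) {f : V → ℝ} (hf : f ≠ 0) :
    ∃ t : ℝ, 0 < t ∧ t • f ∈ pSphere V p := by
  have hS : 0 < ∑ u : V, |f u| ^ p := by
    simpa using sum_mul_abs_rpow_pos (fun _ => one_pos) hf p
  refine ⟨(∑ u : V, |f u| ^ p) ^ (-p⁻¹), Real.rpow_pos_of_pos hS _, ?_⟩
  have ht := Real.rpow_pos_of_pos hS (-p⁻¹)
  simp only [pSphere, Set.mem_ofPred_eq, Pi.smul_apply, smul_eq_mul, abs_mul_rpow_of_pos ht,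
    ← Finset.mul_sum, ← Real.rpow_mul hS.le, neg_mul, inv_mul_cancel₀ hp, Real.rpow_neg_one]
  exact inv_mul_cancel₀ hS.ne'

end Sphere

namespace IsEigenpair

variable {V : Type*} [Fintype V] {ω : V → V → ℝ} {κ ϱ : V → ℝ} {p lam : ℝ} {g : V → ℝ}

lemma sum_genLap_mul (heig : IsEigenpair ω κ ϱ p lam g) (h : V → ℝ) :
    ∑ u : V, genLap ω κ p g u * h u = lam * ∑ u : V, ϱ u * (phiP p (g u) * h u) := by
  simp only [heig.2, Finset.mul_sum, mul_assoc]

lemma rayleigh_eq (heig : IsEigenpair ω κ ϱ p lam g) (hω : ∀ u v, ω u v = ω v u)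
    (hϱ : ∀ u, 0 < ϱ u) (hp : p ≠ 0) :
    rayleigh ω κ ϱ p g = lam := by
  rw [rayleigh_eq_pEnergy_div, pEnergy_eq_sum_genLap_mul_self hω κ hp, heig.sum_genLap_mul]
  simp only [phiP_mul_self hp]
  exact mul_div_cancel_right₀ lam (sum_mul_abs_rpow_pos hϱ heig.1 p).ne'

lemma le_rayleigh (heig : IsEigenpair ω κ ϱ p lam g) (hω : ∀ u v, ω u v = ω v u)
    (hω_nonneg : ∀ u v, 0 ≤ ω u v) (hp : 1 < p) (hg : ∀ u, 0 < g u) {f : V → ℝ}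
    (hf : 0 < ∑ u : V, ϱ u * |f u| ^ p) :
    lam ≤ rayleigh ω κ ϱ p f := by
  rw [rayleigh_eq_pEnergy_div, le_div_iff₀ hf]
  calc lam * ∑ u : V, ϱ u * |f u| ^ p
      = ∑ u : V, genLap ω κ p g u * (|f u| ^ p / g u ^ (p - 1)) := by
        simp only [heig.sum_genLap_mul, phiP_mul_div_rpow_sub_one p (hg _)]
    _ ≤ pEnergy ω κ p f := sum_genLap_mul_le_pEnergy hω hω_nonneg κ hp hg f

end IsEigenpair

theorem stmt1_general {V : Type*} [Fintype V]
    (G : SimpleGraph V) (ω : V → V → ℝ) (κ ϱ : V → ℝ) (p : ℝ) (hp : 1 < p)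
    (hωsymm : ∀ u v, ω u v = ω v u)
    (hωpos : ∀ u v, G.Adj u v → 0 < ω u v)
    (hωzero : ∀ u v, ¬ G.Adj u v → ω u v = 0)
    (hϱpos : ∀ u, 0 < ϱ u)
    (lam1 : ℝ) (hlam1 : IsLeast (rayleigh ω κ ϱ p '' pSphere V p) lam1)
    (lam : ℝ) (g : V → ℝ) (heig : IsEigenpair ω κ ϱ p lam g)
    (hpos : ∀ u, 0 < g u) :
    lam = lam1 := by
  have hp0 : p ≠ 0 := (zero_lt_one.trans hp).ne'
  have hω_nonneg : ∀ u v, 0 ≤ ω u v := fun u v => by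
    by_cases h : G.Adj u v
    · exact (hωpos u v h).le
    · exact (hωzero u v h).ge
  obtain ⟨⟨f, hf, rfl⟩, hmin⟩ := hlam1
  apply le_antisymm
  · exact heig.le_rayleigh hωsymm hω_nonneg hp hpos
      (sum_mul_abs_rpow_pos hϱpos (ne_zero_of_mem_pSphere hp0 hf) p)
  · obtain ⟨t, ht, htg⟩ := exists_pos_smul_mem_pSphere hp0 heig.1
    calc rayleigh ω κ ϱ p f ≤ rayleigh ω κ ϱ p (t • g) := hmin ⟨_, htg, rfl⟩
      _ = rayleigh ω κ ϱ p g := rayleigh_smul ω κ ϱ p ht g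
      _ = lam := heig.rayleigh_eq hωsymm hϱpos hp0

/-- on a connected graph, an eigenvalue with a strictly positive eigenfunction
must be the first variational eigenvalue `λ₁ = min_{f ∈ 𝒮_p} ℛ(f)`. -/
theorem stmt1 {V : Type*} [Fintype V]
    (G : SimpleGraph V) (ω : V → V → ℝ) (κ ϱ : V → ℝ) (p : ℝ) (hp : 1 < p)
    (hωsymm : ∀ u v, ω u v = ω v u)
    (hωpos : ∀ u v, G.Adj u v → 0 < ω u v)
    (hωzero : ∀ u v, ¬ G.Adj u v → ω u v = 0)
    (hϱpos : ∀ u, 0 < ϱ u)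
    (hconn : G.Connected)
    (lam1 : ℝ) (hlam1 : IsLeast (rayleigh ω κ ϱ p '' pSphere V p) lam1)
    (lam : ℝ) (g : V → ℝ) (heig : IsEigenpair ω κ ϱ p lam g)
    (hpos : ∀ u, 0 < g u) :
    lam = lam1 :=
  stmt1_general G ω κ ϱ p hp hωsymm hωpos hωzero hϱpos lam1 hlam1 lam g heig hpos
end
end

section
/- Assume 𝒢 is connected and let λ_N = max_{f ∈ 𝒮_p} ℛ(f) be the largest variational eigenvalue of ℋ_p. Then |λ_N| ≤ max_{u ∈ V} ( 2^{p−1} Σ_{v ∼ u} ω_{uv}/ϱ_u + |κ_u|/ϱ_u ). -/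
noncomputable section

open Finset

/-!
Every edge term is controlled by the vertex terms at its ends,
`|f u - f v|^p ≤ 2^{p-1} (|f u|^p + |f v|^p)`, and by symmetry of `ω` each vertex collects
`2^{p-1} Σ_v ω_{uv} |f u|^p` from the halved double sum. The numerator of `ℛ(f)` is thus at most
`Σ_u (2^{p-1} Σ_v ω_{uv} + |κ_u|) |f u|^p`, which is at most the claimed maximum times the
denominator `Σ_u ϱ_u |f u|^p`.
-/

lemma abs_sub_rpow_le {p : ℝ} (hp : 1 ≤ p) (a b : ℝ) :
    |a - b| ^ p ≤ 2 ^ (p - 1) * (|a| ^ p + |b| ^ p) := by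
  have h := NNReal.coe_le_coe.mpr
    (NNReal.rpow_add_le_mul_rpow_add_rpow (Real.toNNReal |a|) (Real.toNNReal |b|) hp)
  push_cast [NNReal.coe_rpow, Real.coe_toNNReal _ (abs_nonneg _)] at h
  exact (Real.rpow_le_rpow (abs_nonneg _) (abs_sub _ _) (by linarith)).trans h

section WeightedSums

variable {V : Type*} [Fintype V] {ω : V → V → ℝ} {p : ℝ}

lemma sum_sum_mul_abs_sub_rpow_le (hωsymm : ∀ u v, ω u v = ω v u) (hω : ∀ u v, 0 ≤ ω u v)
    (hp : 1 ≤ p) (f : V → ℝ) :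
    ∑ u, ∑ v, ω u v * |f u - f v| ^ p ≤
      2 * (2 ^ (p - 1) * ∑ u, (∑ v, ω u v) * |f u| ^ p) := by
  have hswap : ∑ u, ∑ v, ω u v * |f v| ^ p = ∑ u, ∑ v, ω u v * |f u| ^ p := by
    rw [sum_comm]
    simp only [hωsymm]
  calc ∑ u, ∑ v, ω u v * |f u - f v| ^ p
      ≤ ∑ u, ∑ v, 2 ^ (p - 1) * (ω u v * |f u| ^ p + ω u v * |f v| ^ p) := by
        refine sum_le_sum fun u _ => sum_le_sum fun v _ => ?_
        rw [← mul_add, mul_left_comm]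
        exact mul_le_mul_of_nonneg_left (abs_sub_rpow_le hp _ _) (hω u v)
    _ = 2 ^ (p - 1) * (∑ u, ∑ v, ω u v * |f u| ^ p + ∑ u, ∑ v, ω u v * |f v| ^ p) := by
        simp only [← mul_sum, ← sum_add_distrib]
    _ = 2 * (2 ^ (p - 1) * ∑ u, (∑ v, ω u v) * |f u| ^ p) := by
        rw [hswap, sum_congr rfl fun u _ => (sum_mul univ (ω u) _).symm]
        ring

lemma abs_rayleigh_numerator_le (hωsymm : ∀ u v, ω u v = ω v u) (hω : ∀ u v, 0 ≤ ω u v)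
    (hp : 1 ≤ p) (κ f : V → ℝ) :
    |(1 / 2) * ∑ u, ∑ v, ω u v * |f u - f v| ^ p + ∑ u, κ u * |f u| ^ p| ≤
      ∑ u, (2 ^ (p - 1) * ∑ v, ω u v + |κ u|) * |f u| ^ p := by
  have hedge : 0 ≤ ∑ u, ∑ v, ω u v * |f u - f v| ^ p :=
    sum_nonneg fun u _ => sum_nonneg fun v _ => mul_nonneg (hω u v) (by positivity)
  have hpot : |∑ u, κ u * |f u| ^ p| ≤ ∑ u, |κ u| * |f u| ^ p :=
    (abs_sum_le_sum_abs _ _).trans_eq <| sum_congr rfl fun u _ => by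
      rw [abs_mul, abs_of_nonneg (by positivity : (0 : ℝ) ≤ |f u| ^ p)]
  calc _ ≤ (1 / 2) * ∑ u, ∑ v, ω u v * |f u - f v| ^ p + ∑ u, |κ u| * |f u| ^ p := by
        refine (abs_add_le _ _).trans (add_le_add (le_of_eq ?_) hpot)
        exact abs_of_nonneg (mul_nonneg (by norm_num) hedge)
    _ ≤ 2 ^ (p - 1) * ∑ u, (∑ v, ω u v) * |f u| ^ p + ∑ u, |κ u| * |f u| ^ p := by
        linarith [sum_sum_mul_abs_sub_rpow_le hωsymm hω hp f]
    _ = ∑ u, (2 ^ (p - 1) * ∑ v, ω u v + |κ u|) * |f u| ^ p := by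
        rw [mul_sum, ← sum_add_distrib]
        exact sum_congr rfl fun u _ => by ring

end WeightedSums

lemma abs_rayleigh_le {V : Type*} [Fintype V] {ω : V → V → ℝ} {κ ϱ : V → ℝ} {p M : ℝ}
    (hωsymm : ∀ u v, ω u v = ω v u) (hω : ∀ u v, 0 ≤ ω u v) (hϱ : ∀ u, 0 < ϱ u)
    (hp : 1 ≤ p) {f : V → ℝ} (hf : f ≠ 0)
    (hM : ∀ u, 2 ^ (p - 1) * (∑ v, ω u v / ϱ u) + |κ u| / ϱ u ≤ M) :
    |rayleigh ω κ ϱ p f| ≤ M := by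
  obtain ⟨w, hw⟩ := Function.ne_iff.mp hf
  have hden : 0 < ∑ u, ϱ u * |f u| ^ p :=
    sum_pos' (fun u _ => by have := hϱ u; positivity)
      ⟨w, mem_univ w, mul_pos (hϱ w) (Real.rpow_pos_of_pos (abs_pos.mpr hw) p)⟩
  have hvertex : ∀ u, 2 ^ (p - 1) * ∑ v, ω u v + |κ u| ≤ M * ϱ u := fun u => by
    have := hM u
    rwa [← sum_div, ← mul_div_assoc, ← add_div, div_le_iff₀ (hϱ u)] at this
  rw [rayleigh, abs_div, abs_of_pos hden, div_le_iff₀ hden]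
  refine (abs_rayleigh_numerator_le hωsymm hω hp κ f).trans ?_
  rw [mul_sum]
  refine sum_le_sum fun u _ => ?_
  rw [← mul_assoc]
  exact mul_le_mul_of_nonneg_right (hvertex u) (by positivity)

theorem stmt3_general {V : Type*} [Fintype V] [Nonempty V]
    (G : SimpleGraph V) (ω : V → V → ℝ) (κ ϱ : V → ℝ) (p : ℝ) (hp : 1 < p)
    (hωsymm : ∀ u v, ω u v = ω v u)
    (hωpos : ∀ u v, G.Adj u v → 0 < ω u v)
    (hωzero : ∀ u v, ¬ G.Adj u v → ω u v = 0)
    (hϱpos : ∀ u, 0 < ϱ u)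
    (lamN : ℝ) (hlamN : IsGreatest (rayleigh ω κ ϱ p '' pSphere V p) lamN) :
    |lamN| ≤ Finset.univ.sup' Finset.univ_nonempty
      (fun u : V => (2 : ℝ) ^ (p - 1) * (∑ v : V, ω u v / ϱ u) + |κ u| / ϱ u) := by
  obtain ⟨⟨f, hf, rfl⟩, -⟩ := hlamN
  have hω : ∀ u v, 0 ≤ ω u v := fun u v => by
    by_cases huv : G.Adj u v
    · exact (hωpos u v huv).le
    · exact (hωzero u v huv).ge
  have hf0 : f ≠ 0 := by
    rintro rfl
    simp [pSphere, Real.zero_rpow (by linarith : p ≠ 0)] at hf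
  exact abs_rayleigh_le hωsymm hω hϱpos hp.le hf0 fun u => by apply le_sup' _ (mem_univ u)

/-- a bound on the magnitude of the largest variational eigenvalue
`λ_N = max_{f ∈ 𝒮_p} ℛ(f)`. -/
theorem stmt3 {V : Type*} [Fintype V] [Nonempty V]
    (G : SimpleGraph V) (ω : V → V → ℝ) (κ ϱ : V → ℝ) (p : ℝ) (hp : 1 < p)
    (hωsymm : ∀ u v, ω u v = ω v u)
    (hωpos : ∀ u v, G.Adj u v → 0 < ω u v)
    (hωzero : ∀ u v, ¬ G.Adj u v → ω u v = 0)
    (hϱpos : ∀ u, 0 < ϱ u)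
    (hconn : G.Connected)
    (lamN : ℝ) (hlamN : IsGreatest (rayleigh ω κ ϱ p '' pSphere V p) lamN) :
    |lamN| ≤ Finset.univ.sup' Finset.univ_nonempty
      (fun u : V => (2 : ℝ) ^ (p - 1) * (∑ v : V, ω u v / ϱ u) + |κ u| / ϱ u) :=
  stmt3_general G ω κ ϱ p hp hωsymm hωpos hωzero hϱpos lamN hlamN
end
end

section
/- Assume 𝒢 is connected and let f : V → ℝ. Let E_z be the set of edges having at least one endpoint u with f(u) = 0. Then ζ(f) = |E| − |E_z| + z(f) − |V| + ν(f) − l(f). If moreover f is not identically zero, then ζ(f) ≤ |E| − |V| + ν(f) − l(f). -/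
noncomputable section

open Finset

/-! Every edge of `𝒢` either touches a zero of `f`, or is a sign change of `f`, or is an edge
of `𝒢₊(f)`; with `|V| = z(f) + |V(𝒢₊(f))|` the identity is then the definition of `l(f)`
rearranged. For the inequality, `z(f) ≤ |E_z|` when `f ≢ 0`: sending each zero of `f` to the
first edge of a shortest path towards a fixed vertex of the support is injective, since the
distance to that vertex strictly decreases along such edges. -/

namespace SimpleGraph

variable {V : Type*} {G : SimpleGraph V}

theorem Connected.exists_adj_dist_lt (hG : G.Connected) {u r : V} (hne : u ≠ r) :
    ∃ w, G.Adj u w ∧ G.dist w r < G.dist u r := by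
  obtain ⟨p, hp⟩ := hG.exists_walk_length_eq_dist u r
  cases p with
  | nil => exact absurd rfl hne
  | cons hadj q =>
    refine ⟨_, hadj, ?_⟩
    have := dist_le q
    rw [Walk.length_cons] at hp
    omega

theorem Connected.ncard_le_ncard_edgeSet_meeting [Finite V] (hG : G.Connected) {S : Set V}
    {r : V} (hr : r ∉ S) : S.ncard ≤ {e ∈ G.edgeSet | ∃ u ∈ e, u ∈ S}.ncard := by
  have step : ∀ z ∈ S, ∃ w, G.Adj z w ∧ G.dist w r < G.dist z r := fun z hz =>
    hG.exists_adj_dist_lt (ne_of_mem_of_not_mem hz hr)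
  choose! w hadj hdist using step
  refine Set.ncard_le_ncard_of_injOn (fun z => s(z, w z))
    (fun z hz => ⟨hadj z hz, z, Sym2.mem_mk_left _ _, hz⟩) ?_
  intro z₁ h₁ z₂ h₂ he
  rcases Sym2.eq_iff.1 he with ⟨h, -⟩ | ⟨h₁₂, h₂₁⟩
  · exact h
  · have d₁ := hdist z₁ h₁
    have d₂ := hdist z₂ h₂
    rw [← h₁₂] at d₂
    rw [h₂₁] at d₁
    omega

end SimpleGraph

section SignPartition

variable {V : Type*}

lemma disjoint_negGraph_posGraph (G : SimpleGraph V) (f : V → ℝ) :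
    Disjoint (negGraph G f) (posGraph G f) := by
  rw [disjoint_iff]
  ext u v
  simp only [SimpleGraph.inf_adj, negGraph, posGraph, SimpleGraph.bot_adj, iff_false]
  exact fun ⟨⟨_, hneg⟩, _, hpos⟩ => (lt_asymm hneg hpos).elim

lemma negGraph_sup_posGraph_le (G : SimpleGraph V) (f : V → ℝ) :
    negGraph G f ⊔ posGraph G f ≤ G := fun _ _ h => h.elim And.left And.left

lemma edgeSet_sdiff_negGraph_sup_posGraph (G : SimpleGraph V) (f : V → ℝ) :
    G.edgeSet \ (negGraph G f ⊔ posGraph G f).edgeSet = {e ∈ G.edgeSet | ∃ u ∈ e, f u = 0} := by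
  ext e
  induction e using Sym2.ind with
  | _ u v =>
    simp only [Set.mem_sdiff, Set.mem_ofPred_eq, SimpleGraph.mem_edgeSet,
      SimpleGraph.sup_adj, negGraph, posGraph, Sym2.mem_iff, exists_eq_or_imp, exists_eq_left]
    refine and_congr_right fun hadj => ?_
    simp only [hadj, true_and, not_or, not_lt, ← mul_eq_zero]
    rw [and_comm, ← le_antisymm_iff]

lemma ncard_edgeSet_eq_add [Fintype V] (G : SimpleGraph V) (f : V → ℝ) :
    G.edgeSet.ncard = {e ∈ G.edgeSet | ∃ u ∈ e, f u = 0}.ncard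
      + zetaCount G f + (posGraph G f).edgeSet.ncard := by
  have hsub := SimpleGraph.edgeSet_mono (negGraph_sup_posGraph_le G f)
  rw [← Set.ncard_sdiff_add_ncard_of_subset hsub, edgeSet_sdiff_negGraph_sup_posGraph,
    SimpleGraph.edgeSet_sup, Set.ncard_union_eq
      (SimpleGraph.disjoint_edgeSet.2 (disjoint_negGraph_posGraph G f)), zetaCount, add_assoc]

end SignPartition

/-- the identity `ζ(f) = |E| − |E_z| + z(f) − |V| + ν(f) − l(f)` on a
connected graph, and, when `f` is not identically zero,
`ζ(f) ≤ |E| − |V| + ν(f) − l(f)`. -/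
theorem stmt13 {V : Type*} [Fintype V]
    (G : SimpleGraph V) (hconn : G.Connected) (f : V → ℝ) :
    (zetaCount G f : ℤ) =
      (G.edgeSet.ncard : ℤ) - ({e ∈ G.edgeSet | ∃ u ∈ e, f u = 0}.ncard : ℤ)
        + (zeroCount f : ℤ) - (Fintype.card V : ℤ)
        + (nodalCount G f : ℤ) - loopCount G f ∧
    (f ≠ 0 →
      (zetaCount G f : ℤ) ≤ (G.edgeSet.ncard : ℤ) - (Fintype.card V : ℤ)
        + (nodalCount G f : ℤ) - loopCount G f) := by
  have hE := ncard_edgeSet_eq_add G f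
  have hV : zeroCount f + {u : V | f u ≠ 0}.ncard = Fintype.card V := by
    simpa [zeroCount, Set.compl_ofPred, Nat.card_eq_fintype_card] using
      Set.ncard_add_ncard_compl {u : V | f u = 0}
  refine ⟨by rw [loopCount]; omega, fun hf => ?_⟩
  obtain ⟨r, hr⟩ := Function.ne_iff.1 hf
  have hz : zeroCount f ≤ {e ∈ G.edgeSet | ∃ u ∈ e, f u = 0}.ncard :=
    hconn.ncard_le_ncard_edgeSet_meeting (S := {u | f u = 0}) hr
  rw [loopCount]
  omega
end
end
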